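/- (Equilibrium foundation of BFR) For every finite economic environment, every player i, and every payoff type θ_i: a_i ∈ BFR_i^∞(θ_i) if and only if there exist a finite information structure Y, a Bayes-Nash equilibrium strategy profile s of the Bayesian game (E, Y), and a signal y_i ∈ Y_i such that a_i = s_i(θ_i, y_i). Equivalently, BFR_i^∞(θ_i) = ∪_Y ∪_{s ∈ BNE^Y} ∪_{y_i ∈ Y_i} {s_i(θ_i, y_i)}. -/
import Mathlib


open Finset

section Defs

variable {Θ0 Θ1 Θ2 A1 A2 Y1 Y2 : Type}
variable [Fintype Θ0] [Fintype Θ1] [Fintype Θ2] [Fintype A1] [Fintype A2]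
variable [Fintype Y1] [Fintype Y2]

/-- A probability distribution on a finite type, encoded as a nonnegative
function summing to one. -/
def IsProb {X : Type} [Fintype X] (μ : X → ℝ) : Prop :=
  (∀ x, 0 ≤ μ x) ∧ ∑ x, μ x = 1

/-- Expected utility of player 1 of action `a1` with payoff type `θ1` under
conjecture `μ` on `Θ0 × Θ2 × A2`. -/
def EU1 (u1 : A1 → A2 → Θ0 → Θ1 → Θ2 → ℝ) (μ : Θ0 × Θ2 × A2 → ℝ)
    (a1 : A1) (θ1 : Θ1) : ℝ :=
  ∑ x : Θ0 × Θ2 × A2, μ x * u1 a1 x.2.2 x.1 θ1 x.2.1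

def EU2 (u2 : A1 → A2 → Θ0 → Θ1 → Θ2 → ℝ) (μ : Θ0 × Θ1 × A1 → ℝ)
    (a2 : A2) (θ2 : Θ2) : ℝ :=
  ∑ x : Θ0 × Θ1 × A1, μ x * u2 x.2.2 a2 x.1 x.2.1 θ2

/-- Best replies of player 1 against conjecture `μ` for payoff type `θ1`. -/
def BR1 (u1 : A1 → A2 → Θ0 → Θ1 → Θ2 → ℝ) (μ : Θ0 × Θ2 × A2 → ℝ) (θ1 : Θ1) : Set A1 :=
  {a1 | ∀ b1, EU1 u1 μ b1 θ1 ≤ EU1 u1 μ a1 θ1}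

def BR2 (u2 : A1 → A2 → Θ0 → Θ1 → Θ2 → ℝ) (μ : Θ0 × Θ1 × A1 → ℝ) (θ2 : Θ2) : Set A2 :=
  {a2 | ∀ b2, EU2 u2 μ b2 θ2 ≤ EU2 u2 μ a2 θ2}

/-- One elimination step of belief-free rationalizability for player 1, given the
opponent's surviving correspondence `F2`. -/
def step1 (u1 : A1 → A2 → Θ0 → Θ1 → Θ2 → ℝ) (F2 : Θ2 → Set A2) (θ1 : Θ1) : Set A1 :=
  {a1 | ∃ μ : Θ0 × Θ2 × A2 → ℝ, IsProb μ ∧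
    (∀ x, μ x ≠ 0 → x.2.2 ∈ F2 x.2.1) ∧ a1 ∈ BR1 u1 μ θ1}

def step2 (u2 : A1 → A2 → Θ0 → Θ1 → Θ2 → ℝ) (F1 : Θ1 → Set A1) (θ2 : Θ2) : Set A2 :=
  {a2 | ∃ μ : Θ0 × Θ1 × A1 → ℝ, IsProb μ ∧
    (∀ x, μ x ≠ 0 → x.2.2 ∈ F1 x.2.1) ∧ a2 ∈ BR2 u2 μ θ2}

/-- The iterative belief-free rationalizability procedure (both players). -/
def BFR (u1 u2 : A1 → A2 → Θ0 → Θ1 → Θ2 → ℝ) :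
    ℕ → (Θ1 → Set A1) × (Θ2 → Set A2)
  | 0 => (fun _ => Set.univ, fun _ => Set.univ)
  | n + 1 =>
      (fun θ1 => (BFR u1 u2 n).1 θ1 ∩ step1 u1 (BFR u1 u2 n).2 θ1,
       fun θ2 => (BFR u1 u2 n).2 θ2 ∩ step2 u2 (BFR u1 u2 n).1 θ2)

def BFRinf1 (u1 u2 : A1 → A2 → Θ0 → Θ1 → Θ2 → ℝ) (θ1 : Θ1) : Set A1 :=
  ⋂ n, (BFR u1 u2 n).1 θ1

def BFRinf2 (u1 u2 : A1 → A2 → Θ0 → Θ1 → Θ2 → ℝ) (θ2 : Θ2) : Set A2 :=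
  ⋂ n, (BFR u1 u2 n).2 θ2

/-- Marginal on `Θ0 × Θ2 × A2` of a belief on `Θ0 × Θ2 × Y2 × A2`. -/
def margA1 (μ : Θ0 × Θ2 × Y2 × A2 → ℝ) : Θ0 × Θ2 × A2 → ℝ :=
  fun x => ∑ y2 : Y2, μ (x.1, x.2.1, y2, x.2.2)

/-- Marginal on `Θ0 × Θ2 × Y2` of a belief on `Θ0 × Θ2 × Y2 × A2`. -/
def margY1 (μ : Θ0 × Θ2 × Y2 × A2 → ℝ) : Θ0 × Θ2 × Y2 → ℝ :=
  fun x => ∑ a2 : A2, μ (x.1, x.2.1, x.2.2, a2)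

def margA2 (μ : Θ0 × Θ1 × Y1 × A1 → ℝ) : Θ0 × Θ1 × A1 → ℝ :=
  fun x => ∑ y1 : Y1, μ (x.1, x.2.1, y1, x.2.2)

def margY2 (μ : Θ0 × Θ1 × Y1 × A1 → ℝ) : Θ0 × Θ1 × Y1 → ℝ :=
  fun x => ∑ a1 : A1, μ (x.1, x.2.1, x.2.2, a1)

/-- One elimination step of interim correlated rationalizability for player 1. -/
def istep1 (u1 : A1 → A2 → Θ0 → Θ1 → Θ2 → ℝ)
    (π1 : Θ1 → Y1 → (Θ0 × Θ2 × Y2 → ℝ)) (F2 : Θ2 → Y2 → Set A2)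
    (θ1 : Θ1) (y1 : Y1) : Set A1 :=
  {a1 | ∃ μ : Θ0 × Θ2 × Y2 × A2 → ℝ, IsProb μ ∧
    (∀ x, μ x ≠ 0 → x.2.2.2 ∈ F2 x.2.1 x.2.2.1) ∧
    margY1 μ = π1 θ1 y1 ∧ a1 ∈ BR1 u1 (margA1 μ) θ1}

def istep2 (u2 : A1 → A2 → Θ0 → Θ1 → Θ2 → ℝ)
    (π2 : Θ2 → Y2 → (Θ0 × Θ1 × Y1 → ℝ)) (F1 : Θ1 → Y1 → Set A1)
    (θ2 : Θ2) (y2 : Y2) : Set A2 :=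
  {a2 | ∃ μ : Θ0 × Θ1 × Y1 × A1 → ℝ, IsProb μ ∧
    (∀ x, μ x ≠ 0 → x.2.2.2 ∈ F1 x.2.1 x.2.2.1) ∧
    margY2 μ = π2 θ2 y2 ∧ a2 ∈ BR2 u2 (margA2 μ) θ2}

/-- The iterative interim correlated rationalizability procedure in the Bayesian
game with information structure `(Y1, Y2, π1, π2)`. -/
def ICR (u1 u2 : A1 → A2 → Θ0 → Θ1 → Θ2 → ℝ)
    (π1 : Θ1 → Y1 → (Θ0 × Θ2 × Y2 → ℝ)) (π2 : Θ2 → Y2 → (Θ0 × Θ1 × Y1 → ℝ)) :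
    ℕ → (Θ1 → Y1 → Set A1) × (Θ2 → Y2 → Set A2)
  | 0 => (fun _ _ => Set.univ, fun _ _ => Set.univ)
  | n + 1 =>
      (fun θ1 y1 => (ICR u1 u2 π1 π2 n).1 θ1 y1 ∩
          istep1 u1 π1 (ICR u1 u2 π1 π2 n).2 θ1 y1,
       fun θ2 y2 => (ICR u1 u2 π1 π2 n).2 θ2 y2 ∩
          istep2 u2 π2 (ICR u1 u2 π1 π2 n).1 θ2 y2)

def ICRinf1 (u1 u2 : A1 → A2 → Θ0 → Θ1 → Θ2 → ℝ)
    (π1 : Θ1 → Y1 → (Θ0 × Θ2 × Y2 → ℝ)) (π2 : Θ2 → Y2 → (Θ0 × Θ1 × Y1 → ℝ))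
    (θ1 : Θ1) (y1 : Y1) : Set A1 :=
  ⋂ n, (ICR u1 u2 π1 π2 n).1 θ1 y1

def ICRinf2 (u1 u2 : A1 → A2 → Θ0 → Θ1 → Θ2 → ℝ)
    (π1 : Θ1 → Y1 → (Θ0 × Θ2 × Y2 → ℝ)) (π2 : Θ2 → Y2 → (Θ0 × Θ1 × Y1 → ℝ))
    (θ2 : Θ2) (y2 : Y2) : Set A2 :=
  ⋂ n, (ICR u1 u2 π1 π2 n).2 θ2 y2

/-- Distribution over `(θ0, θ_{-i}, a_{-i})` induced by `π1(θ1,y1)` and the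
opponent's strategy `s2`. -/
def push1 [DecidableEq A2] (π1 : Θ1 → Y1 → (Θ0 × Θ2 × Y2 → ℝ))
    (s2 : Θ2 → Y2 → A2) (θ1 : Θ1) (y1 : Y1) : Θ0 × Θ2 × A2 → ℝ :=
  fun x => ∑ y2 : Y2, if s2 x.2.1 y2 = x.2.2 then π1 θ1 y1 (x.1, x.2.1, y2) else 0

def push2 [DecidableEq A1] (π2 : Θ2 → Y2 → (Θ0 × Θ1 × Y1 → ℝ))
    (s1 : Θ1 → Y1 → A1) (θ2 : Θ2) (y2 : Y2) : Θ0 × Θ1 × A1 → ℝ :=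
  fun x => ∑ y1 : Y1, if s1 x.2.1 y1 = x.2.2 then π2 θ2 y2 (x.1, x.2.1, y1) else 0

/-- Bayes-Nash equilibrium of the Bayesian game. -/
def IsBNE [DecidableEq A1] [DecidableEq A2]
    (u1 u2 : A1 → A2 → Θ0 → Θ1 → Θ2 → ℝ)
    (π1 : Θ1 → Y1 → (Θ0 × Θ2 × Y2 → ℝ)) (π2 : Θ2 → Y2 → (Θ0 × Θ1 × Y1 → ℝ))
    (s1 : Θ1 → Y1 → A1) (s2 : Θ2 → Y2 → A2) : Prop :=
  (∀ θ1 y1, s1 θ1 y1 ∈ BR1 u1 (push1 π1 s2 θ1 y1) θ1) ∧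
  (∀ θ2 y2, s2 θ2 y2 ∈ BR2 u2 (push2 π2 s1 θ2 y2) θ2)

/-- One elimination step of Δ-rationalizability for player 1 under the
informational restriction `D1`. -/
def dstep1 (u1 : A1 → A2 → Θ0 → Θ1 → Θ2 → ℝ)
    (D1 : Θ1 → Set (Θ0 × Θ2 → ℝ)) (F2 : Θ2 → Set A2) (θ1 : Θ1) : Set A1 :=
  {a1 | ∃ μ : Θ0 × Θ2 × A2 → ℝ, IsProb μ ∧
    (fun p : Θ0 × Θ2 => ∑ a2 : A2, μ (p.1, p.2, a2)) ∈ D1 θ1 ∧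
    (∀ x, μ x ≠ 0 → x.2.2 ∈ F2 x.2.1) ∧ a1 ∈ BR1 u1 μ θ1}

def dstep2 (u2 : A1 → A2 → Θ0 → Θ1 → Θ2 → ℝ)
    (D2 : Θ2 → Set (Θ0 × Θ1 → ℝ)) (F1 : Θ1 → Set A1) (θ2 : Θ2) : Set A2 :=
  {a2 | ∃ μ : Θ0 × Θ1 × A1 → ℝ, IsProb μ ∧
    (fun p : Θ0 × Θ1 => ∑ a1 : A1, μ (p.1, p.2, a1)) ∈ D2 θ2 ∧
    (∀ x, μ x ≠ 0 → x.2.2 ∈ F1 x.2.1) ∧ a2 ∈ BR2 u2 μ θ2}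

/-- The iterative Δ-rationalizability procedure. -/
def DR (u1 u2 : A1 → A2 → Θ0 → Θ1 → Θ2 → ℝ)
    (D1 : Θ1 → Set (Θ0 × Θ2 → ℝ)) (D2 : Θ2 → Set (Θ0 × Θ1 → ℝ)) :
    ℕ → (Θ1 → Set A1) × (Θ2 → Set A2)
  | 0 => (fun _ => Set.univ, fun _ => Set.univ)
  | n + 1 =>
      (fun θ1 => (DR u1 u2 D1 D2 n).1 θ1 ∩ dstep1 u1 D1 (DR u1 u2 D1 D2 n).2 θ1,
       fun θ2 => (DR u1 u2 D1 D2 n).2 θ2 ∩ dstep2 u2 D2 (DR u1 u2 D1 D2 n).1 θ2)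

def DRinf1 (u1 u2 : A1 → A2 → Θ0 → Θ1 → Θ2 → ℝ)
    (D1 : Θ1 → Set (Θ0 × Θ2 → ℝ)) (D2 : Θ2 → Set (Θ0 × Θ1 → ℝ)) (θ1 : Θ1) : Set A1 :=
  ⋂ n, (DR u1 u2 D1 D2 n).1 θ1

def DRinf2 (u1 u2 : A1 → A2 → Θ0 → Θ1 → Θ2 → ℝ)
    (D1 : Θ1 → Set (Θ0 × Θ2 → ℝ)) (D2 : Θ2 → Set (Θ0 × Θ1 → ℝ)) (θ2 : Θ2) : Set A2 :=
  ⋂ n, (DR u1 u2 D1 D2 n).2 θ2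

end Defs

section Aux

variable {Θ0 Θ1 Θ2 A1 A2 : Type}
variable [Fintype Θ0] [Fintype Θ1] [Fintype Θ2] [Fintype A1] [Fintype A2]
variable (u1 u2 : A1 → A2 → Θ0 → Θ1 → Θ2 → ℝ)

lemma bfr_succ (n : ℕ) :
    BFR u1 u2 (n+1) =
      (fun θ1 => (BFR u1 u2 n).1 θ1 ∩ step1 u1 (BFR u1 u2 n).2 θ1,
       fun θ2 => (BFR u1 u2 n).2 θ2 ∩ step2 u2 (BFR u1 u2 n).1 θ2) := rfl

lemma bfr_anti {m n : ℕ} (h : m ≤ n) :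
    (∀ θ1, (BFR u1 u2 n).1 θ1 ⊆ (BFR u1 u2 m).1 θ1) ∧
    (∀ θ2, (BFR u1 u2 n).2 θ2 ⊆ (BFR u1 u2 m).2 θ2) := by
  induction n with
  | zero =>
    have hm := Nat.le_zero.mp h; subst hm
    exact ⟨fun _ => subset_rfl, fun _ => subset_rfl⟩
  | succ n ih =>
    rcases Nat.lt_or_ge m (n+1) with h' | h'
    · have hmn : m ≤ n := Nat.lt_succ_iff.mp h'
      exact ⟨fun θ1 a ha => (ih hmn).1 θ1 ha.1, fun θ2 a ha => (ih hmn).2 θ2 ha.1⟩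
    · have hm : m = n+1 := le_antisymm h h'
      subst hm
      exact ⟨fun _ => subset_rfl, fun _ => subset_rfl⟩

lemma step1_mono {F G : Θ2 → Set A2} (h : ∀ θ2, F θ2 ⊆ G θ2) (θ1 : Θ1) :
    step1 u1 F θ1 ⊆ step1 u1 G θ1 := by
  rintro a1 ⟨μ, hμ, hs, hb⟩
  exact ⟨μ, hμ, fun x hx => h _ (hs x hx), hb⟩

lemma step2_mono {F G : Θ1 → Set A1} (h : ∀ θ1, F θ1 ⊆ G θ1) (θ2 : Θ2) :
    step2 u2 F θ2 ⊆ step2 u2 G θ2 := by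
  rintro a2 ⟨μ, hμ, hs, hb⟩
  exact ⟨μ, hμ, fun x hx => h _ (hs x hx), hb⟩

lemma mem_bfr1_of_step {n : ℕ} {θ1 : Θ1} {a1 : A1}
    (h : a1 ∈ step1 u1 (BFR u1 u2 n).2 θ1) :
    ∀ m, m ≤ n + 1 → a1 ∈ (BFR u1 u2 m).1 θ1 := by
  intro m hm
  induction m with
  | zero => exact Set.mem_univ a1
  | succ m ih =>
    have hmn : m ≤ n := Nat.succ_le_succ_iff.mp hm
    exact ⟨ih (Nat.le_succ_of_le hmn),
      step1_mono u1 (bfr_anti u1 u2 hmn).2 θ1 h⟩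

lemma mem_bfr2_of_step {n : ℕ} {θ2 : Θ2} {a2 : A2}
    (h : a2 ∈ step2 u2 (BFR u1 u2 n).1 θ2) :
    ∀ m, m ≤ n + 1 → a2 ∈ (BFR u1 u2 m).2 θ2 := by
  intro m hm
  induction m with
  | zero => exact Set.mem_univ a2
  | succ m ih =>
    have hmn : m ≤ n := Nat.succ_le_succ_iff.mp hm
    exact ⟨ih (Nat.le_succ_of_le hmn),
      step2_mono u2 (bfr_anti u1 u2 hmn).1 θ2 h⟩

lemma bfr_nonempty [Nonempty Θ0] [Nonempty Θ1] [Nonempty Θ2]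
    [Nonempty A1] [Nonempty A2] (n : ℕ) :
    (∀ θ1, ((BFR u1 u2 n).1 θ1).Nonempty) ∧
    (∀ θ2, ((BFR u1 u2 n).2 θ2).Nonempty) := by
  classical
  induction n with
  | zero => exact ⟨fun _ => Set.univ_nonempty, fun _ => Set.univ_nonempty⟩
  | succ n ih =>
    constructor
    · intro θ1
      obtain ⟨θ0⟩ := (inferInstance : Nonempty Θ0)
      obtain ⟨θ2⟩ := (inferInstance : Nonempty Θ2)
      obtain ⟨a2, ha2⟩ := ih.2 θ2
      obtain ⟨μ, hprob, hsupp⟩ :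
          ∃ μ : Θ0 × Θ2 × A2 → ℝ, IsProb μ ∧
            (∀ x, μ x ≠ 0 → x.2.2 ∈ (BFR u1 u2 n).2 x.2.1) := by
        refine ⟨fun x => if x = (θ0, θ2, a2) then 1 else 0, ⟨?_, ?_⟩, ?_⟩
        · intro x; by_cases h : x = (θ0, θ2, a2) <;> simp [h]
        · simp [Finset.sum_ite_eq']
        · intro x hx
          have hx' : x = (θ0, θ2, a2) := by
            by_contra h; exact hx (by simp [h])
          subst hx'; exact ha2
      obtain ⟨b1, hb1⟩ := Finite.exists_max (fun b1 => EU1 u1 μ b1 θ1)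
      exact ⟨b1, mem_bfr1_of_step u1 u2 ⟨μ, hprob, hsupp, hb1⟩ (n+1) le_rfl⟩
    · intro θ2
      obtain ⟨θ0⟩ := (inferInstance : Nonempty Θ0)
      obtain ⟨θ1⟩ := (inferInstance : Nonempty Θ1)
      obtain ⟨a1, ha1⟩ := ih.1 θ1
      obtain ⟨μ, hprob, hsupp⟩ :
          ∃ μ : Θ0 × Θ1 × A1 → ℝ, IsProb μ ∧
            (∀ x, μ x ≠ 0 → x.2.2 ∈ (BFR u1 u2 n).1 x.2.1) := by
        refine ⟨fun x => if x = (θ0, θ1, a1) then 1 else 0, ⟨?_, ?_⟩, ?_⟩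
        · intro x; by_cases h : x = (θ0, θ1, a1) <;> simp [h]
        · simp [Finset.sum_ite_eq']
        · intro x hx
          have hx' : x = (θ0, θ1, a1) := by
            by_contra h; exact hx (by simp [h])
          subst hx'; exact ha1
      obtain ⟨b2, hb2⟩ := Finite.exists_max (fun b2 => EU2 u2 μ b2 θ2)
      exact ⟨b2, mem_bfr2_of_step u1 u2 ⟨μ, hprob, hsupp, hb2⟩ (n+1) le_rfl⟩

lemma bfr_succ_congr {a b : ℕ} (h : BFR u1 u2 a = BFR u1 u2 b) :
    BFR u1 u2 (a+1) = BFR u1 u2 (b+1) := by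
  rw [bfr_succ, bfr_succ, h]

lemma bfr_stab : ∃ N, ∀ k, N ≤ k → BFR u1 u2 k = BFR u1 u2 N := by
  classical
  suffices h : ∀ m n : ℕ, m < n → BFR u1 u2 m = BFR u1 u2 n →
      ∃ N, ∀ k, N ≤ k → BFR u1 u2 k = BFR u1 u2 N by
    obtain ⟨m, n, hmn, heq⟩ :=
      Finite.exists_ne_map_eq_of_infinite (fun k => BFR u1 u2 k)
    rcases hmn.lt_or_gt with h' | h'
    · exact h m n h' heq
    · exact h n m h' heq.symm
  intro m n hlt heq
  have h1 : BFR u1 u2 (m+1) = BFR u1 u2 m := by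
    have hsub1 := bfr_anti u1 u2 (Nat.le_succ m)
    have hsub2 := bfr_anti u1 u2 (show m+1 ≤ n from hlt)
    refine Prod.ext (funext fun θ1 => Set.Subset.antisymm (hsub1.1 θ1) ?_)
      (funext fun θ2 => Set.Subset.antisymm (hsub1.2 θ2) ?_)
    · intro a ha
      rw [heq] at ha
      exact hsub2.1 θ1 ha
    · intro a ha
      rw [heq] at ha
      exact hsub2.2 θ2 ha
  refine ⟨m, fun k hk => ?_⟩
  obtain ⟨j, rfl⟩ := Nat.exists_eq_add_of_le hk
  clear hk
  induction j with
  | zero => rfl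
  | succ j ih =>
    have h2 : BFR u1 u2 (m + (j+1)) = BFR u1 u2 ((m+j)+1) := rfl
    rw [h2, bfr_succ_congr u1 u2 ih, h1]

lemma bne_mem {Y1 Y2 : Type} [Fintype Y1] [Fintype Y2]
    [DecidableEq A1] [DecidableEq A2]
    {π1 : Θ1 → Y1 → (Θ0 × Θ2 × Y2 → ℝ)} {π2 : Θ2 → Y2 → (Θ0 × Θ1 × Y1 → ℝ)}
    {s1 : Θ1 → Y1 → A1} {s2 : Θ2 → Y2 → A2}
    (hp1 : ∀ θ1 y1, IsProb (π1 θ1 y1)) (hp2 : ∀ θ2 y2, IsProb (π2 θ2 y2))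
    (hbne : IsBNE u1 u2 π1 π2 s1 s2) (n : ℕ) :
    (∀ θ1 y1, s1 θ1 y1 ∈ (BFR u1 u2 n).1 θ1) ∧
    (∀ θ2 y2, s2 θ2 y2 ∈ (BFR u1 u2 n).2 θ2) := by
  induction n with
  | zero => exact ⟨fun _ _ => Set.mem_univ _, fun _ _ => Set.mem_univ _⟩
  | succ n ih =>
    constructor
    · intro θ1 y1
      refine ⟨ih.1 θ1 y1, push1 π1 s2 θ1 y1, ⟨?_, ?_⟩, ?_, hbne.1 θ1 y1⟩
      · intro x
        refine Finset.sum_nonneg fun y2 _ => ?_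
        split
        · exact (hp1 θ1 y1).1 _
        · exact le_rfl
      · have hsum := (hp1 θ1 y1).2
        rw [← hsum]
        simp only [push1, Fintype.sum_prod_type]
        refine Finset.sum_congr rfl fun θ0 _ => Finset.sum_congr rfl fun θ2 _ => ?_
        rw [Finset.sum_comm]
        refine Finset.sum_congr rfl fun y2 _ => ?_
        simp [Finset.sum_ite_eq]
      · intro x hx
        obtain ⟨y2, -, hy2⟩ := Finset.exists_ne_zero_of_sum_ne_zero hx
        have hs : s2 x.2.1 y2 = x.2.2 := by
          by_contra h; exact hy2 (if_neg h)
        rw [← hs]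
        exact ih.2 x.2.1 y2
    · intro θ2 y2
      refine ⟨ih.2 θ2 y2, push2 π2 s1 θ2 y2, ⟨?_, ?_⟩, ?_, hbne.2 θ2 y2⟩
      · intro x
        refine Finset.sum_nonneg fun y1 _ => ?_
        split
        · exact (hp2 θ2 y2).1 _
        · exact le_rfl
      · have hsum := (hp2 θ2 y2).2
        rw [← hsum]
        simp only [push2, Fintype.sum_prod_type]
        refine Finset.sum_congr rfl fun θ0 _ => Finset.sum_congr rfl fun θ1 _ => ?_
        rw [Finset.sum_comm]
        refine Finset.sum_congr rfl fun y1 _ => ?_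
        simp [Finset.sum_ite_eq]
      · intro x hx
        obtain ⟨y1, -, hy1⟩ := Finset.exists_ne_zero_of_sum_ne_zero hx
        have hs : s1 x.2.1 y1 = x.2.2 := by
          by_contra h; exact hy1 (if_neg h)
        rw [← hs]
        exact ih.1 x.2.1 y1

lemma construct [Nonempty A1] [Nonempty A2] [DecidableEq A1] [DecidableEq A2]
    (h0 : Nonempty Θ0) (h1 : Nonempty Θ1) (h2 : Nonempty Θ2) :
    ∃ (π1 : Θ1 → Θ1 × A1 → (Θ0 × Θ2 × (Θ2 × A2) → ℝ))
      (π2 : Θ2 → Θ2 × A2 → (Θ0 × Θ1 × (Θ1 × A1) → ℝ))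
      (s1 : Θ1 → Θ1 × A1 → A1) (s2 : Θ2 → Θ2 × A2 → A2),
      (∀ θ1 y1, IsProb (π1 θ1 y1)) ∧ (∀ θ2 y2, IsProb (π2 θ2 y2)) ∧
      IsBNE u1 u2 π1 π2 s1 s2 ∧
      (∀ θ1 a1, a1 ∈ BFRinf1 u1 u2 θ1 → a1 = s1 θ1 (θ1, a1)) ∧
      (∀ θ2 a2, a2 ∈ BFRinf2 u1 u2 θ2 → a2 = s2 θ2 (θ2, a2)) := by
  classical
  haveI := h0; haveI := h1; haveI := h2
  obtain ⟨N, hN⟩ := bfr_stab u1 u2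
  have hfp1 : ∀ θ1 a1, a1 ∈ (BFR u1 u2 N).1 θ1 →
      a1 ∈ step1 u1 (BFR u1 u2 N).2 θ1 := by
    intro θ1 a1 ha
    have hh : a1 ∈ (BFR u1 u2 (N+1)).1 θ1 := by
      rw [hN (N+1) (Nat.le_succ N)]; exact ha
    exact hh.2
  have hfp2 : ∀ θ2 a2, a2 ∈ (BFR u1 u2 N).2 θ2 →
      a2 ∈ step2 u2 (BFR u1 u2 N).1 θ2 := by
    intro θ2 a2 ha
    have hh : a2 ∈ (BFR u1 u2 (N+1)).2 θ2 := by
      rw [hN (N+1) (Nat.le_succ N)]; exact ha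
    exact hh.2
  have hne := bfr_nonempty u1 u2 N
  choose d1 hd1 using hne.1
  choose d2 hd2 using hne.2
  set g1 : Θ1 → A1 → A1 :=
    fun θ1 a1 => if a1 ∈ (BFR u1 u2 N).1 θ1 then a1 else d1 θ1 with hg1def
  set g2 : Θ2 → A2 → A2 :=
    fun θ2 a2 => if a2 ∈ (BFR u1 u2 N).2 θ2 then a2 else d2 θ2 with hg2def
  have hg1mem : ∀ θ1 a1, g1 θ1 a1 ∈ (BFR u1 u2 N).1 θ1 := by
    intro θ1 a1
    by_cases h : a1 ∈ (BFR u1 u2 N).1 θ1 <;> simp [hg1def, h, hd1]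
  have hg2mem : ∀ θ2 a2, g2 θ2 a2 ∈ (BFR u1 u2 N).2 θ2 := by
    intro θ2 a2
    by_cases h : a2 ∈ (BFR u1 u2 N).2 θ2 <;> simp [hg2def, h, hd2]
  have hg1eq : ∀ θ1 a1, a1 ∈ (BFR u1 u2 N).1 θ1 → g1 θ1 a1 = a1 := by
    intro θ1 a1 h; simp [hg1def, h]
  have hg2eq : ∀ θ2 a2, a2 ∈ (BFR u1 u2 N).2 θ2 → g2 θ2 a2 = a2 := by
    intro θ2 a2 h; simp [hg2def, h]
  have hch1 : ∀ θ1 a1, ∃ μ : Θ0 × Θ2 × A2 → ℝ, IsProb μ ∧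
      (∀ x, μ x ≠ 0 → x.2.2 ∈ (BFR u1 u2 N).2 x.2.1) ∧
      g1 θ1 a1 ∈ BR1 u1 μ θ1 :=
    fun θ1 a1 => hfp1 θ1 _ (hg1mem θ1 a1)
  have hch2 : ∀ θ2 a2, ∃ μ : Θ0 × Θ1 × A1 → ℝ, IsProb μ ∧
      (∀ x, μ x ≠ 0 → x.2.2 ∈ (BFR u1 u2 N).1 x.2.1) ∧
      g2 θ2 a2 ∈ BR2 u2 μ θ2 :=
    fun θ2 a2 => hfp2 θ2 _ (hg2mem θ2 a2)
  choose ν1 hν1p hν1s hν1b using hch1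
  choose ν2 hν2p hν2s hν2b using hch2
  refine ⟨fun (θ1 : Θ1) (y1 : Θ1 × A1) (x : Θ0 × Θ2 × (Θ2 × A2)) =>
            if x.2.2.1 = x.2.1 then ν1 θ1 y1.2 (x.1, x.2.1, x.2.2.2) else 0,
          fun (θ2 : Θ2) (y2 : Θ2 × A2) (x : Θ0 × Θ1 × (Θ1 × A1)) =>
            if x.2.2.1 = x.2.1 then ν2 θ2 y2.2 (x.1, x.2.1, x.2.2.2) else 0,
          fun θ1 y1 => g1 θ1 y1.2, fun θ2 y2 => g2 θ2 y2.2,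
          ?_, ?_, ⟨?_, ?_⟩, ?_, ?_⟩
  · -- IsProb π1
    intro θ1 y1
    constructor
    · intro x
      dsimp only
      split
      · exact (hν1p θ1 y1.2).1 _
      · exact le_rfl
    · have hsum := (hν1p θ1 y1.2).2
      simp only [Fintype.sum_prod_type] at hsum ⊢
      rw [← hsum]
      refine Finset.sum_congr rfl fun θ0 _ => Finset.sum_congr rfl fun θ2 _ => ?_
      have hh : ∀ t2 : Θ2,
          (∑ a2 : A2, if t2 = θ2 then ν1 θ1 y1.2 (θ0, θ2, a2) else 0) =
          if t2 = θ2 then ∑ a2 : A2, ν1 θ1 y1.2 (θ0, θ2, a2) else 0 := by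
        intro t2; split <;> simp
      rw [Finset.sum_congr rfl fun t2 _ => hh t2, Finset.sum_ite_eq']
      simp
  · -- IsProb π2
    intro θ2 y2
    constructor
    · intro x
      dsimp only
      split
      · exact (hν2p θ2 y2.2).1 _
      · exact le_rfl
    · have hsum := (hν2p θ2 y2.2).2
      simp only [Fintype.sum_prod_type] at hsum ⊢
      rw [← hsum]
      refine Finset.sum_congr rfl fun θ0 _ => Finset.sum_congr rfl fun θ1 _ => ?_
      have hh : ∀ t1 : Θ1,
          (∑ a1 : A1, if t1 = θ1 then ν2 θ2 y2.2 (θ0, θ1, a1) else 0) =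
          if t1 = θ1 then ∑ a1 : A1, ν2 θ2 y2.2 (θ0, θ1, a1) else 0 := by
        intro t1; split <;> simp
      rw [Finset.sum_congr rfl fun t1 _ => hh t1, Finset.sum_ite_eq']
      simp
  · -- BNE player 1
    intro θ1 y1
    have hpush : push1
        (fun (θ1 : Θ1) (y1 : Θ1 × A1) (x : Θ0 × Θ2 × (Θ2 × A2)) =>
          if x.2.2.1 = x.2.1 then ν1 θ1 y1.2 (x.1, x.2.1, x.2.2.2) else 0)
        (fun θ2 y2 => g2 θ2 y2.2) θ1 y1 = ν1 θ1 y1.2 := by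
      funext x
      obtain ⟨θ0, θ2, b2⟩ := x
      simp only [push1, Fintype.sum_prod_type]
      have hstep1 : ∀ (t2 : Θ2) (a2 : A2),
          (if g2 θ2 a2 = b2 then (if t2 = θ2 then ν1 θ1 y1.2 (θ0, θ2, a2) else 0) else 0) =
          (if t2 = θ2 then (if g2 θ2 a2 = b2 then ν1 θ1 y1.2 (θ0, θ2, a2) else 0) else 0) := by
        intro t2 a2
        by_cases h : t2 = θ2 <;> by_cases h' : g2 θ2 a2 = b2 <;> simp [h, h']
      calc (∑ t2 : Θ2, ∑ a2 : A2,
              if g2 θ2 a2 = b2 then (if t2 = θ2 then ν1 θ1 y1.2 (θ0, θ2, a2) else 0) else 0)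
          = ∑ t2 : Θ2, ∑ a2 : A2,
              if t2 = θ2 then (if g2 θ2 a2 = b2 then ν1 θ1 y1.2 (θ0, θ2, a2) else 0) else 0 := by
            exact Finset.sum_congr rfl fun t2 _ => Finset.sum_congr rfl fun a2 _ => hstep1 t2 a2
        _ = ∑ t2 : Θ2, if t2 = θ2 then
              (∑ a2 : A2, if g2 θ2 a2 = b2 then ν1 θ1 y1.2 (θ0, θ2, a2) else 0) else 0 := by
            refine Finset.sum_congr rfl fun t2 _ => ?_
            split <;> simp
        _ = ∑ a2 : A2, if g2 θ2 a2 = b2 then ν1 θ1 y1.2 (θ0, θ2, a2) else 0 := by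
            rw [Finset.sum_ite_eq']; simp
        _ = ∑ a2 : A2, if a2 = b2 then ν1 θ1 y1.2 (θ0, θ2, a2) else 0 := by
            refine Finset.sum_congr rfl fun a2 _ => ?_
            by_cases hz : ν1 θ1 y1.2 (θ0, θ2, a2) = 0
            · simp [hz]
            · have ha2 : a2 ∈ (BFR u1 u2 N).2 θ2 := hν1s θ1 y1.2 (θ0, θ2, a2) hz
              rw [hg2eq θ2 a2 ha2]
        _ = ν1 θ1 y1.2 (θ0, θ2, b2) := by
            rw [Finset.sum_ite_eq']; simp
    rw [hpush]
    exact hν1b θ1 y1.2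
  · -- BNE player 2
    intro θ2 y2
    have hpush : push2
        (fun (θ2 : Θ2) (y2 : Θ2 × A2) (x : Θ0 × Θ1 × (Θ1 × A1)) =>
          if x.2.2.1 = x.2.1 then ν2 θ2 y2.2 (x.1, x.2.1, x.2.2.2) else 0)
        (fun θ1 y1 => g1 θ1 y1.2) θ2 y2 = ν2 θ2 y2.2 := by
      funext x
      obtain ⟨θ0, θ1, b1⟩ := x
      simp only [push2, Fintype.sum_prod_type]
      have hstep1 : ∀ (t1 : Θ1) (a1 : A1),
          (if g1 θ1 a1 = b1 then (if t1 = θ1 then ν2 θ2 y2.2 (θ0, θ1, a1) else 0) else 0) =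
          (if t1 = θ1 then (if g1 θ1 a1 = b1 then ν2 θ2 y2.2 (θ0, θ1, a1) else 0) else 0) := by
        intro t1 a1
        by_cases h : t1 = θ1 <;> by_cases h' : g1 θ1 a1 = b1 <;> simp [h, h']
      calc (∑ t1 : Θ1, ∑ a1 : A1,
              if g1 θ1 a1 = b1 then (if t1 = θ1 then ν2 θ2 y2.2 (θ0, θ1, a1) else 0) else 0)
          = ∑ t1 : Θ1, ∑ a1 : A1,
              if t1 = θ1 then (if g1 θ1 a1 = b1 then ν2 θ2 y2.2 (θ0, θ1, a1) else 0) else 0 := by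
            exact Finset.sum_congr rfl fun t1 _ => Finset.sum_congr rfl fun a1 _ => hstep1 t1 a1
        _ = ∑ t1 : Θ1, if t1 = θ1 then
              (∑ a1 : A1, if g1 θ1 a1 = b1 then ν2 θ2 y2.2 (θ0, θ1, a1) else 0) else 0 := by
            refine Finset.sum_congr rfl fun t1 _ => ?_
            split <;> simp
        _ = ∑ a1 : A1, if g1 θ1 a1 = b1 then ν2 θ2 y2.2 (θ0, θ1, a1) else 0 := by
            rw [Finset.sum_ite_eq']; simp
        _ = ∑ a1 : A1, if a1 = b1 then ν2 θ2 y2.2 (θ0, θ1, a1) else 0 := by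
            refine Finset.sum_congr rfl fun a1 _ => ?_
            by_cases hz : ν2 θ2 y2.2 (θ0, θ1, a1) = 0
            · simp [hz]
            · have ha1 : a1 ∈ (BFR u1 u2 N).1 θ1 := hν2s θ2 y2.2 (θ0, θ1, a1) hz
              rw [hg1eq θ1 a1 ha1]
        _ = ν2 θ2 y2.2 (θ0, θ1, b1) := by
            rw [Finset.sum_ite_eq']; simp
    rw [hpush]
    exact hν2b θ2 y2.2
  · -- BFRinf1 clause
    intro θ1 a1 h
    have hmem : a1 ∈ (BFR u1 u2 N).1 θ1 := Set.mem_iInter.mp h N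
    exact (hg1eq θ1 a1 hmem).symm
  · -- BFRinf2 clause
    intro θ2 a2 h
    have hmem : a2 ∈ (BFR u1 u2 N).2 θ2 := Set.mem_iInter.mp h N
    exact (hg2eq θ2 a2 hmem).symm

end Aux


theorem bfr_equals_bne_union {Θ0 Θ1 Θ2 A1 A2 : Type} [Fintype Θ0] [Fintype Θ1] [Fintype Θ2] [Fintype A1] [Fintype A2]
    (u1 u2 : A1 → A2 → Θ0 → Θ1 → Θ2 → ℝ)
    [Nonempty A1] [Nonempty A2] [DecidableEq A1] [DecidableEq A2] :
    (∀ (θ1 : Θ1) (a1 : A1), a1 ∈ BFRinf1 u1 u2 θ1 ↔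
      ∃ (Y1 Y2 : Type) (_ : Fintype Y1) (_ : Fintype Y2)
        (π1 : Θ1 → Y1 → (Θ0 × Θ2 × Y2 → ℝ)) (π2 : Θ2 → Y2 → (Θ0 × Θ1 × Y1 → ℝ))
        (s1 : Θ1 → Y1 → A1) (s2 : Θ2 → Y2 → A2),
        (∀ θ1 y1, IsProb (π1 θ1 y1)) ∧ (∀ θ2 y2, IsProb (π2 θ2 y2)) ∧
        IsBNE u1 u2 π1 π2 s1 s2 ∧ ∃ y1 : Y1, a1 = s1 θ1 y1) ∧
    (∀ (θ2 : Θ2) (a2 : A2), a2 ∈ BFRinf2 u1 u2 θ2 ↔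
      ∃ (Y1 Y2 : Type) (_ : Fintype Y1) (_ : Fintype Y2)
        (π1 : Θ1 → Y1 → (Θ0 × Θ2 × Y2 → ℝ)) (π2 : Θ2 → Y2 → (Θ0 × Θ1 × Y1 → ℝ))
        (s1 : Θ1 → Y1 → A1) (s2 : Θ2 → Y2 → A2),
        (∀ θ1 y1, IsProb (π1 θ1 y1)) ∧ (∀ θ2 y2, IsProb (π2 θ2 y2)) ∧
        IsBNE u1 u2 π1 π2 s1 s2 ∧ ∃ y2 : Y2, a2 = s2 θ2 y2)  := by
  constructor
  · intro θ1 a1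
    constructor
    · intro h
      have hmem1 : a1 ∈ (BFR u1 u2 1).1 θ1 := Set.mem_iInter.mp h 1
      obtain ⟨μ, hμ, -, -⟩ := hmem1.2
      have hne : Nonempty (Θ0 × Θ2 × A2) := by
        by_contra hc
        rw [not_nonempty_iff] at hc
        have h2 := hμ.2
        rw [Finset.univ_eq_empty, Finset.sum_empty] at h2
        norm_num at h2
      have h0 : Nonempty Θ0 := ⟨hne.some.1⟩
      have h2 : Nonempty Θ2 := ⟨hne.some.2.1⟩
      have h1 : Nonempty Θ1 := ⟨θ1⟩
      obtain ⟨π1, π2, s1, s2, hp1, hp2, hbne, hkey1, -⟩ := construct u1 u2 h0 h1 h2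
      exact ⟨Θ1 × A1, Θ2 × A2, inferInstance, inferInstance, π1, π2, s1, s2,
        hp1, hp2, hbne, (θ1, a1), hkey1 θ1 a1 h⟩
    · rintro ⟨Y1, Y2, hf1, hf2, π1, π2, s1, s2, hp1, hp2, hbne, y1, rfl⟩
      exact Set.mem_iInter.mpr fun n => (bne_mem u1 u2 hp1 hp2 hbne n).1 θ1 y1
  · intro θ2 a2
    constructor
    · intro h
      have hmem1 : a2 ∈ (BFR u1 u2 1).2 θ2 := Set.mem_iInter.mp h 1
      obtain ⟨μ, hμ, -, -⟩ := hmem1.2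
      have hne : Nonempty (Θ0 × Θ1 × A1) := by
        by_contra hc
        rw [not_nonempty_iff] at hc
        have h2' := hμ.2
        rw [Finset.univ_eq_empty, Finset.sum_empty] at h2'
        norm_num at h2'
      have h0 : Nonempty Θ0 := ⟨hne.some.1⟩
      have h1 : Nonempty Θ1 := ⟨hne.some.2.1⟩
      have h2 : Nonempty Θ2 := ⟨θ2⟩
      obtain ⟨π1, π2, s1, s2, hp1, hp2, hbne, -, hkey2⟩ := construct u1 u2 h0 h1 h2
      exact ⟨Θ1 × A1, Θ2 × A2, inferInstance, inferInstance, π1, π2, s1, s2,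
        hp1, hp2, hbne, (θ2, a2), hkey2 θ2 a2 h⟩
    · rintro ⟨Y1, Y2, hf1, hf2, π1, π2, s1, s2, hp1, hp2, hbne, y2, rfl⟩
      exact Set.mem_iInter.mpr fun n => (bne_mem u1 u2 hp1 hp2 hbne n).2 θ2 y2
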